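/- arXiv:0712.3154 — 2 statements merged into one kernel-verified Lean document; each statement's English description precedes it below -/
import Mathlib

section
/- Let n ≥ 1, let b be an invertible n×n complex matrix, and let X be the n²×n² matrix with entries X_{(c,d),(x,y)} = b_{c d} · (b⁻¹)_{x y}. Define X₁ = X ⊗ Iₙ and X₂ = Iₙ ⊗ X as n³×n³ matrices acting on ℂⁿ ⊗ ℂⁿ ⊗ ℂⁿ. Then X₁ X₂ X₁ = X₁ and X₂ X₁ X₂ = X₂. -/
open Matrix Kronecker

/-- For an invertible `n × n` complex matrix `b` and the Temperley–Lieb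
generator `X` with entries `X_{(c,d),(x,y)} = b_{cd} (b⁻¹)_{xy}`, the matrices
`X₁ = X ⊗ Iₙ` and `X₂ = Iₙ ⊗ X` on `ℂⁿ ⊗ ℂⁿ ⊗ ℂⁿ` satisfy
`X₁ X₂ X₁ = X₁` and `X₂ X₁ X₂ = X₂`. -/
theorem tl_generator_braid (n : ℕ) (hn : 1 ≤ n)
    (b : Matrix (Fin n) (Fin n) ℂ) (hb : IsUnit b.det)
    (X : Matrix (Fin n × Fin n) (Fin n × Fin n) ℂ)
    (hX : ∀ c d x y : Fin n, X (c, d) (x, y) = b c d * b⁻¹ x y)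
    (X₁ X₂ : Matrix (Fin n × Fin n × Fin n) (Fin n × Fin n × Fin n) ℂ)
    (hX₁ : X₁ = Matrix.reindex (Equiv.prodAssoc (Fin n) (Fin n) (Fin n))
      (Equiv.prodAssoc (Fin n) (Fin n) (Fin n)) (X ⊗ₖ (1 : Matrix (Fin n) (Fin n) ℂ)))
    (hX₂ : X₂ = (1 : Matrix (Fin n) (Fin n) ℂ) ⊗ₖ X) :
    X₁ * X₂ * X₁ = X₁ ∧ X₂ * X₁ * X₂ = X₂ := by
  have hbi : b⁻¹ * b = 1 := nonsing_inv_mul b hb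
  have hbi' : b * b⁻¹ = 1 := mul_nonsing_inv b hb
  have h1 : ∀ a d c x y z : Fin n, X₁ (a, d, c) (x, y, z)
      = b a d * b⁻¹ x y * (if c = z then 1 else 0) := by
    intro a d c x y z
    simp [hX₁, Matrix.reindex_apply, Equiv.prodAssoc, hX, Matrix.one_apply]
  have h2 : ∀ a d c x y z : Fin n, X₂ (a, d, c) (x, y, z)
      = (if a = x then 1 else 0) * (b d c * b⁻¹ y z) := by
    intro a d c x y z
    simp [hX₂, hX, Matrix.one_apply]
  constructor
  · ext ⟨a, d, c⟩ ⟨x, y, z⟩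
    simp only [mul_apply, Fintype.sum_prod_type, h1, h2, mul_ite, ite_mul, mul_zero, zero_mul,
      mul_one, one_mul, Finset.sum_ite_irrel, Finset.sum_const_zero, Finset.sum_ite_eq,
      Finset.sum_ite_eq', Finset.mem_univ, if_true]
    have inner1 : ∀ p q : Fin n, (∑ r : Fin n, b a d * b⁻¹ p r * (b r c * b⁻¹ q z))
        = b a d * b⁻¹ q z * ((b⁻¹ * b) p c) := by
      intro p q
      rw [mul_apply, Finset.mul_sum]
      exact Finset.sum_congr rfl fun r _ => by ring
    simp only [inner1, hbi, one_apply, mul_ite, ite_mul, mul_zero, zero_mul, mul_one,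
      Finset.sum_ite_irrel, Finset.sum_const_zero, Finset.sum_ite_eq, Finset.sum_ite_eq',
      Finset.mem_univ, if_true]
    have inner2 : (∑ q : Fin n, b a d * b⁻¹ q z * (b c q * b⁻¹ x y))
        = b a d * b⁻¹ x y * ((b * b⁻¹) c z) := by
      rw [mul_apply, Finset.mul_sum]
      exact Finset.sum_congr rfl fun q _ => by ring
    rw [inner2, hbi', one_apply]
    split <;> simp
  · ext ⟨a, d, c⟩ ⟨x, y, z⟩
    simp only [mul_apply, Fintype.sum_prod_type, h1, h2, mul_ite, ite_mul, mul_zero, zero_mul,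
      mul_one, one_mul, Finset.sum_ite_irrel, Finset.sum_const_zero, Finset.sum_ite_eq,
      Finset.sum_ite_eq', Finset.mem_univ, if_true]
    have inner1 : ∀ r t : Fin n, (∑ q : Fin n, b d c * b⁻¹ q t * (b a q * b⁻¹ x r))
        = b d c * b⁻¹ x r * ((b * b⁻¹) a t) := by
      intro r t
      rw [mul_apply, Finset.mul_sum]
      exact Finset.sum_congr rfl fun q _ => by ring
    simp only [inner1, hbi', one_apply, mul_ite, ite_mul, mul_zero, zero_mul, mul_one,
      Finset.sum_ite_irrel, Finset.sum_const_zero, Finset.sum_ite_eq, Finset.sum_ite_eq',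
      Finset.mem_univ, if_true]
    have inner2 : (∑ r : Fin n, b d c * b⁻¹ x r * (b r a * b⁻¹ y z))
        = b d c * b⁻¹ y z * ((b⁻¹ * b) x a) := by
      rw [mul_apply, Finset.mul_sum]
      exact Finset.sum_congr rfl fun r _ => by ring
    rw [inner2, hbi, one_apply]
    rcases eq_or_ne a x with h | h
    · subst h; simp
    · simp [h, Ne.symm h]
end

section
/- Let A be an associative unital ℂ-algebra, q ∈ ℂ with q ≠ 0, and let X₁, X₂ ∈ A satisfy the Temperley–Lieb relations X_i² = −(q + q⁻¹)X_i (i = 1,2), X₁X₂X₁ = X₁, X₂X₁X₂ = X₂. For u ∈ ℂ with u ≠ 0 define Ř₁(u) = ω(uq)·1 + ω(u)·X₁ and Ř₂(u) = ω(uq)·1 + ω(u)·X₂, where ω(z) = z − z⁻¹. Then for all nonzero u, v ∈ ℂ the Yang–Baxter equation Ř₁(u) Ř₂(uv) Ř₁(v) = Ř₂(v) Ř₁(uv) Ř₂(u) holds. -/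
/-!
Expanding a product `(a + bX₁)(c + dX₂)(e + fX₁)` with the Temperley–Lieb relations leaves only
the words `1, X₁, X₂, X₁X₂, X₂X₁`, so the Yang–Baxter equation reduces to scalar identities for
`ω(z) = z - z⁻¹`. Those for `1`, `X₁X₂`, `X₂X₁` are commutativity; those for `X₁` and `X₂` are
one identity with `u` and `v` swapped, which follows from two addition formulas for `ω`, the
analogues of `sinh (a + c) sinh (b + c) - sinh a sinh b = sinh c sinh (a + b + c)`.
-/

namespace Baxterization

variable {K : Type*}

section Omega

variable [Field K]

def omega (z : K) : K := z - z⁻¹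

theorem omega_mul_omega_add_omega_mul_omega (q x y : K) :
    omega (x * q) * omega y + omega x * omega (y * q) - (q + q⁻¹) * omega x * omega y =
      omega q * omega (x * y) := by
  rcases eq_or_ne x 0 with rfl | hx
  · simp [omega]
  rcases eq_or_ne y 0 with rfl | hy
  · simp [omega]
  rcases eq_or_ne q 0 with rfl | hq
  · simp [omega]
  simp only [omega]
  field_simp
  ring

theorem omega_mul_omega_sub_omega_mul_omega {q : K} (hq : q ≠ 0) (x y : K) :
    omega (x * q) * omega (y * q) - omega x * omega y = omega q * omega (x * y * q) := by
  rcases eq_or_ne x 0 with rfl | hx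
  · simp [omega]
  rcases eq_or_ne y 0 with rfl | hy
  · simp [omega]
  simp only [omega]
  field_simp
  ring

theorem omega_yangBaxter_coeff {q : K} (hq : q ≠ 0) (x y : K) :
    omega (x * q) * omega (x * y * q) * omega y + omega x * omega (x * y * q) * omega (y * q) +
        -(q + q⁻¹) * omega x * omega (x * y * q) * omega y + omega x * omega (x * y) * omega y =
      omega (x * q) * omega (x * y) * omega (y * q) := by
  linear_combination omega (x * y * q) * omega_mul_omega_add_omega_mul_omega q x y -
    omega (x * y) * omega_mul_omega_sub_omega_mul_omega hq x y

end Omega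

variable {A : Type*} [Ring A]

theorem smul_one_add_smul_mul_mul_of_temperleyLieb [CommRing K] [Algebra K A] {δ : K} {X Y : A}
    (hX : X * X = δ • X) (hXYX : X * Y * X = X) (a b c d e f : K) :
    (a • 1 + b • X) * (c • 1 + d • Y) * (e • 1 + f • X) =
      (a * c * e) • 1 + (a * c * f + b * c * e + δ * b * c * f + b * d * f) • X +
        (a * d * e) • Y + (b * d * e) • (X * Y) + (a * d * f) • (Y * X) := by
  simp only [add_mul, mul_add, smul_mul_assoc, mul_smul_comm, smul_smul, one_mul, mul_one, hX,
    hXYX]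
  match_scalars <;> ring

variable [Field K] [Algebra K A]

def baxterR (q u : K) (X : A) : A := omega (u * q) • 1 + omega u • X

theorem baxterR_yangBaxter {q : K} (hq : q ≠ 0) {X₁ X₂ : A}
    (h1 : X₁ * X₁ = (-(q + q⁻¹)) • X₁) (h2 : X₂ * X₂ = (-(q + q⁻¹)) • X₂)
    (h121 : X₁ * X₂ * X₁ = X₁) (h212 : X₂ * X₁ * X₂ = X₂) (u v : K) :
    baxterR q u X₁ * baxterR q (u * v) X₂ * baxterR q v X₁ =
      baxterR q v X₂ * baxterR q (u * v) X₁ * baxterR q u X₂ := by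
  have hL := smul_one_add_smul_mul_mul_of_temperleyLieb h1 h121 (omega (u * q)) (omega u)
    (omega (u * v * q)) (omega (u * v)) (omega (v * q)) (omega v)
  have hR := smul_one_add_smul_mul_mul_of_temperleyLieb h2 h212 (omega (v * q)) (omega v)
    (omega (u * v * q)) (omega (u * v)) (omega (u * q)) (omega u)
  rw [omega_yangBaxter_coeff hq] at hL
  rw [mul_comm u v, omega_yangBaxter_coeff hq, mul_comm v u] at hR
  simp only [baxterR]
  rw [hL, hR]
  match_scalars <;> ring

end Baxterization

open Baxterization in
/-- Baxterization of Temperley–Lieb generators.  If `X₁, X₂` satisfy the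
Temperley–Lieb relations and `Ř_i(u) = ω(uq)·1 + ω(u)·X_i` with `ω(z) = z - z⁻¹`, then
for all nonzero `u, v` the Yang–Baxter equation
`Ř₁(u) Ř₂(uv) Ř₁(v) = Ř₂(v) Ř₁(uv) Ř₂(u)` holds. -/
theorem baxterized_yang_baxter (A : Type*) [Ring A] [Algebra ℂ A]
    (q : ℂ) (hq : q ≠ 0) (X₁ X₂ : A)
    (h1 : X₁ * X₁ = (-(q + q⁻¹)) • X₁) (h2 : X₂ * X₂ = (-(q + q⁻¹)) • X₂)
    (h121 : X₁ * X₂ * X₁ = X₁) (h212 : X₂ * X₁ * X₂ = X₂)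
    (ω : ℂ → ℂ) (hω : ∀ z : ℂ, ω z = z - z⁻¹)
    (R₁ R₂ : ℂ → A)
    (hR₁ : ∀ u : ℂ, R₁ u = ω (u * q) • (1 : A) + ω u • X₁)
    (hR₂ : ∀ u : ℂ, R₂ u = ω (u * q) • (1 : A) + ω u • X₂) :
    ∀ u v : ℂ, u ≠ 0 → v ≠ 0 →
      R₁ u * R₂ (u * v) * R₁ v = R₂ v * R₁ (u * v) * R₂ u := by
  obtain rfl : ω = omega := funext hω
  obtain rfl : R₁ = fun u => baxterR q u X₁ := funext hR₁
  obtain rfl : R₂ = fun u => baxterR q u X₂ := funext hR₂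
  intro u v _ _
  exact baxterR_yangBaxter hq h1 h2 h121 h212 u v
end
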